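/- Pattern anti-monotonicity on hotspots: for patterns p1 ⊑ p2 with |p1| ≥ 2 and fixed k ≥ 2, if there exists a nonempty route hotspot H_{p2}(k) for pattern p2, then there exists a nonempty route hotspot H_{p1}(k) for pattern p1. -/

import Mathlib

/-!
A route that contains `p2` also contains every subpattern `p1`, so each subgraph satisfying the
hotspot conditions for `p2` satisfies them for `p1`. As `G` has only finitely many subgraphs, such a
subgraph lies below a maximal one for `p1`, which is a hotspot for `p1`.
-/

open SimpleGraph

/-- A route in a graph `G`: a sequence of consecutive edges, modeled as a walk. -/
structure GRoute {V : Type*} (G : SimpleGraph V) where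
  a : V
  b : V
  walk : G.Walk a b

/-- The label sequence induced by a route. -/
def GRoute.labels {V L : Type*} {G : SimpleGraph V} (la : V → L) (r : GRoute G) : List L :=
  r.walk.support.map la

/-- `t` is a subroute of `T`: its edge sequence is a consecutive portion (infix)
of the edge sequence of `T`. -/
def IsSubrouteOf {V : Type*} {G : SimpleGraph V} (t T : GRoute G) : Prop :=
  t.walk.edges <:+: T.walk.edges

/-- The support of the edge `{u,v}` in the subgraph `H`:
the number of triangles of `H` containing it. -/
noncomputable def subSupp {V : Type*} {G : SimpleGraph V} (H : G.Subgraph) (u v : V) : ℕ :=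
  {w : V | H.Adj u w ∧ H.Adj v w}.ncard

/-- The subgraph `H` is a `k`-truss: every edge of `H` lies in at least
`k - 2` triangles of `H`. -/
def SubIsKTruss {V : Type*} {G : SimpleGraph V} (H : G.Subgraph) (k : ℕ) : Prop :=
  ∀ u v : V, H.Adj u v → k - 2 ≤ subSupp H u v

/-- Conditions (1)-(3) of a route hotspot `H` for pattern `p` and level `k`:
`H` is a connected `k`-truss, and there is a finite set `Dp` of at least `min_sup`
subroutes of routes in `D`, each containing the pattern `p` (as a subsequence of its
induced label sequence) and contained in `H`, such that `Dp` covers `H`. -/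
def PreHotspot {V L : Type*} (G : SimpleGraph V) (la : V → L) (D : Set (GRoute G))
    (minSup : ℕ) (p : List L) (k : ℕ) (H : G.Subgraph) : Prop :=
  SubIsKTruss H k ∧ H.Connected ∧
  ∃ Dp : Set (GRoute G), Dp.Finite ∧ minSup ≤ Dp.ncard ∧
    (∀ t ∈ Dp, (∃ T ∈ D, IsSubrouteOf t T) ∧ (p.Sublist (t.labels la)) ∧
      ∀ e ∈ t.walk.edges, e ∈ H.edgeSet) ∧
    (∀ e ∈ H.edgeSet, ∃ t ∈ Dp, e ∈ t.walk.edges)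

/-- `H` is a route hotspot `H_p(k)`: it satisfies the hotspot conditions and
is maximal among subgraphs of `G` satisfying them. -/
def IsHotspot {V L : Type*} (G : SimpleGraph V) (la : V → L) (D : Set (GRoute G))
    (minSup : ℕ) (p : List L) (k : ℕ) (H : G.Subgraph) : Prop :=
  PreHotspot G la D minSup p k H ∧
  ∀ H' : G.Subgraph, H ≤ H' → PreHotspot G la D minSup p k H' → H' = H

section Hotspot

variable {V L : Type*} {G : SimpleGraph V} {la : V → L} {D : Set (GRoute G)} {minSup : ℕ}
  {p p1 p2 : List L} {k : ℕ} {H : G.Subgraph}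

theorem PreHotspot.of_sublist (hsub : p1.Sublist p2) (h : PreHotspot G la D minSup p2 k H) :
    PreHotspot G la D minSup p1 k H := by
  obtain ⟨htruss, hconn, Dp, hfin, hcard, hroutes, hcover⟩ := h
  refine ⟨htruss, hconn, Dp, hfin, hcard, fun t ht => ?_, hcover⟩
  obtain ⟨hsubroute, hpattern, hedges⟩ := hroutes t ht
  exact ⟨hsubroute, hsub.trans hpattern, hedges⟩

theorem isHotspot_iff_maximal :
    IsHotspot G la D minSup p k H ↔ Maximal (PreHotspot G la D minSup p k) H :=
  and_congr_right fun _ =>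
    ⟨fun hmax _ hpre hle => (hmax _ hle hpre).le,
      fun hmax _ hle hpre => (hmax hpre hle).antisymm hle⟩

theorem PreHotspot.exists_le_isHotspot [Finite V] (h : PreHotspot G la D minSup p k H) :
    ∃ H' : G.Subgraph, H ≤ H' ∧ IsHotspot G la D minSup p k H' := by
  obtain ⟨H', hle, hmax⟩ := Finite.exists_le_maximal h
  exact ⟨H', hle, isHotspot_iff_maximal.mpr hmax⟩

end Hotspot

theorem pattern_antimono_hotspot_general {V L : Type*} [Fintype V]
    (G : SimpleGraph V) (la : V → L) (D : Set (GRoute G)) (minSup : ℕ)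
    (p1 p2 : List L) (k : ℕ) (hsub : p1.Sublist p2)
    (h : ∃ H : G.Subgraph, IsHotspot G la D minSup p2 k H) :
    ∃ H : G.Subgraph, IsHotspot G la D minSup p1 k H := by
  obtain ⟨H, hpre, -⟩ := h
  obtain ⟨H', -, hH'⟩ := (hpre.of_sublist hsub).exists_le_isHotspot
  exact ⟨H', hH'⟩

/-- Pattern anti-monotonicity on hotspots: for patterns `p1 ⊑ p2` with `|p1| ≥ 2` and
fixed `k ≥ 2`, if there exists a route hotspot for `p2` and `k`, then there exists a
route hotspot for `p1` and `k`. -/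
theorem pattern_antimono_hotspot {V L : Type*} [Fintype V]
    (G : SimpleGraph V) (la : V → L) (D : Set (GRoute G)) (minSup : ℕ)
    (p1 p2 : List L) (k : ℕ) (hsub : p1.Sublist p2) (hlen : 2 ≤ p1.length)
    (hk : 2 ≤ k) (h : ∃ H : G.Subgraph, IsHotspot G la D minSup p2 k H) :
    ∃ H : G.Subgraph, IsHotspot G la D minSup p1 k H :=
  pattern_antimono_hotspot_general G la D minSup p1 p2 k hsub h
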